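/- For a ring R and a fixed n ∈ ℕ, the following conditions are equivalent: (1) every n-generated projective right R-module is a CS-Rickart module; (2) the free right R-module R^(n) is a CS-Rickart module; (3) the matrix ring Mat_n(R) is a right ACS ring; (4) every n-generated right ideal of R has the form P ⊕ S, where P is a projective right R-module and S is a singular right ideal of R; (5) the right R-module R^(n) is relatively CS-Rickart to R_R; (6) every n-generated submodule of R^(n) has the form P₁ ⊕ … ⊕ Pₙ ⊕ S, where each P₁, …, Pₙ is a projective module isomorphic to a submodule of R_R and S is a singular module. -/

import Mathlib

/-!
Every condition is about kernels of maps out of `Rⁿ` being essential in direct summands.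
An `n`-generated projective module is a retract of `Rⁿ`, and the CS-Rickart property passes to
retracts: (1) ⇔ (2). The ring `Matₙ(R)` acts on row vectors, and the left ideal of matrices with
all rows in `N` detects essentiality of `N`: (2) ⇔ (3). The kernel of a map into `Rⁿ` is the
intersection of the kernels of its coordinates, which can be absorbed one at a time, while `R`
embeds in `Rⁿ`: (2) ⇔ (5).

If `ker φ` is essential in a summand `D` with complement `C`, then `range φ = φ C ⊕ φ D` with
`φ C ≅ C` projective and `φ D` singular: (5) ⇒ (4). Conversely, if `range φ = P ⊕ S`, the
projection of `range φ` onto the projective `P` splits, and `ker φ` is essential in its kernel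
because `φ` only takes singular values there; this uses that in a free module a submodule `A` is
essential as soon as each `{r | r • eᵢ ∈ A}` is essential in `R`. For (4) ⇒ (6) the projective
part of one coordinate at a time is split off, and (6) ⇒ (4) embeds an ideal in one coordinate.
-/

namespace CSRickartPaper

section Defs

variable {R : Type*} [Ring R] {M : Type*} [AddCommGroup M] [Module R M]

/-- `N` is an essential submodule of `P` (inside the ambient module `M`):
`N ≤ P` and every submodule of `P` intersecting `N` trivially is zero. -/
def EssentialIn (N P : Submodule R M) : Prop :=
  N ≤ P ∧ ∀ K : Submodule R M, K ≤ P → N ⊓ K = ⊥ → K = ⊥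

/-- `N` is a small (superfluous) submodule of `P`. -/
def SmallIn (N P : Submodule R M) : Prop :=
  N ≤ P ∧ ∀ K : Submodule R M, K ≤ P → N ⊔ K = P → K = P

/-- `N` is a direct summand of `M`. -/
def IsDirectSummand (N : Submodule R M) : Prop :=
  ∃ K : Submodule R M, IsCompl N K

/-- `N` lies above the direct summand `D` of `M`: `M = D ⊕ K`, `D ≤ N` and
`N ⊓ K` is small in `K`. -/
def LiesAbove (N D : Submodule R M) : Prop :=
  ∃ K : Submodule R M, IsCompl D K ∧ D ≤ N ∧ SmallIn (N ⊓ K) K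

/-- `N` lies above a direct summand of `M`. -/
def LiesAboveSummand (N : Submodule R M) : Prop :=
  ∃ D : Submodule R M, LiesAbove N D

end Defs

section ModuleDefs

variable (R : Type*) [Ring R] (M : Type*) [AddCommGroup M] [Module R M]

/-- `M` is a CS-Rickart module: the kernel of every endomorphism is essential
in a direct summand `eM`, `e` an idempotent endomorphism. -/
def IsCSRickart : Prop :=
  ∀ φ : Module.End R M, ∃ e : Module.End R M, IsIdempotentElem e ∧
    EssentialIn (LinearMap.ker φ) (LinearMap.range e)

/-- `M` is a d-CS-Rickart module: the image of every endomorphism lies above a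
direct summand of `M`. -/
def IsDCSRickart : Prop :=
  ∀ φ : Module.End R M, LiesAboveSummand (LinearMap.range φ)

/-- `M` is a Rickart module. -/
def IsRickart : Prop :=
  ∀ φ : Module.End R M, ∃ e : Module.End R M, IsIdempotentElem e ∧
    LinearMap.ker φ = LinearMap.range e

/-- `M` is a dual Rickart module. -/
def IsDRickart : Prop :=
  ∀ φ : Module.End R M, ∃ e : Module.End R M, IsIdempotentElem e ∧
    LinearMap.range φ = LinearMap.range e

/-- `M` is a CS (extending) module. -/
def IsCSModule : Prop :=
  ∀ N : Submodule R M, ∃ D : Submodule R M, IsDirectSummand D ∧ EssentialIn N D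

/-- `M` is a lifting (d-CS) module. -/
def IsLifting : Prop :=
  ∀ N : Submodule R M, LiesAboveSummand N

/-- `M` is a singular module: the annihilator of every element is an essential
ideal of `R`. -/
def IsSingularModule : Prop :=
  ∀ m : M, EssentialIn (LinearMap.ker (LinearMap.toSpanSingleton R M m)) (⊤ : Submodule R R)

/-- `M` is uniform: every nonzero submodule is essential. -/
def IsUniformModule : Prop :=
  ∀ N : Submodule R M, N ≠ ⊥ → EssentialIn N (⊤ : Submodule R M)

/-- `M` satisfies the C₂ condition: every submodule isomorphic to a direct
summand is itself a direct summand. -/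
def IsC2 : Prop :=
  ∀ N D : Submodule R M, IsDirectSummand D → Nonempty (N ≃ₗ[R] D) → IsDirectSummand N

/-- `M` is K-nonsingular. -/
def IsKNonsingular : Prop :=
  ∀ φ : Module.End R M, ∀ N : Submodule R M, EssentialIn N (⊤ : Submodule R M) →
    N ≤ LinearMap.ker φ → φ = 0

/-- `M` is T-noncosingular. -/
def IsTNoncosingular : Prop :=
  ∀ φ : Module.End R M, φ ≠ 0 → ¬ SmallIn (LinearMap.range φ) (⊤ : Submodule R M)

/-- `M` is an SIP-CS module. -/
def IsSIPCS : Prop :=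
  ∀ A B : Submodule R M, IsDirectSummand A → IsDirectSummand B →
    ∃ D : Submodule R M, IsDirectSummand D ∧ EssentialIn (A ⊓ B) D

/-- `M` is an SSP-d-CS module. -/
def IsSSPdCS : Prop :=
  ∀ A B : Submodule R M, IsDirectSummand A → IsDirectSummand B →
    LiesAboveSummand (A ⊔ B)

end ModuleDefs

section RelDefs

variable (R : Type*) [Ring R] (M N : Type*) [AddCommGroup M] [Module R M]
  [AddCommGroup N] [Module R N]

/-- `M` is relatively CS-Rickart to `N`. -/
def IsRelCSRickart : Prop :=
  ∀ φ : M →ₗ[R] N, ∃ e : Module.End R M, IsIdempotentElem e ∧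
    EssentialIn (LinearMap.ker φ) (LinearMap.range e)

/-- `M` is relatively d-CS-Rickart to `N`. -/
def IsRelDCSRickart : Prop :=
  ∀ φ : M →ₗ[R] N, LiesAboveSummand (LinearMap.range φ)

/-- `N` is `M`-injective. -/
def IsRelInjective : Prop :=
  ∀ (A : Submodule R M) (f : A →ₗ[R] N), ∃ g : M →ₗ[R] N, ∀ a : A, g a = f a

end RelDefs

section RingDefs

variable (R : Type*) [Ring R]

/-- The annihilator of an element `a` of `R`, as an ideal (kernel of `r ↦ r • a`). -/
def annElem (a : R) : Submodule R R :=
  LinearMap.ker (LinearMap.toSpanSingleton R R a)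

/-- The annihilator of a subset `X` of `R`. -/
def annSet (X : Set R) : Submodule R R :=
  ⨅ x ∈ X, annElem R x

/-- The principal ideal generated by `e`, i.e. the image of `r ↦ r • e`. -/
def idealGen (e : R) : Submodule R R :=
  LinearMap.range (LinearMap.toSpanSingleton R R e)

/-- `R` is an ACS ring: the annihilator of every element is essential in a
direct summand `eR` of `R`. -/
def IsACSRing : Prop :=
  ∀ a : R, ∃ e : R, IsIdempotentElem e ∧ EssentialIn (annElem R a) (idealGen R e)

/-- `R` is an essentially Baer ring. -/
def IsEssentiallyBaer : Prop :=
  ∀ X : Set R, X.Nonempty → ∃ e : R, IsIdempotentElem e ∧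
    EssentialIn (annSet R X) (idealGen R e)

/-- The Jacobson radical of the ring `R`. -/
noncomputable def jacRad : Ideal R := Ideal.jacobson (⊥ : Ideal R)

/-- `R` is semiregular: `R/J(R)` is von Neumann regular and idempotents lift
modulo `J(R)` (stated elementwise). -/
def IsSemiregularRing : Prop :=
  (∀ a : R, ∃ b : R, a - a * b * a ∈ jacRad R) ∧
  (∀ a : R, a - a * a ∈ jacRad R →
    ∃ e : R, IsIdempotentElem e ∧ e - a ∈ jacRad R)

/-- `J(R)` coincides with the singular ideal `Z(R)`. -/
def JacEqSingular : Prop :=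
  ∀ a : R, a ∈ jacRad R ↔ EssentialIn (annElem R a) (⊤ : Submodule R R)

end RingDefs

section GenDefs

variable {R : Type*} [Ring R] {M : Type*} [AddCommGroup M] [Module R M]

/-- A submodule is `n`-generated if it is spanned by at most `n` elements. -/
def NGen (n : ℕ) (N : Submodule R M) : Prop :=
  ∃ f : Fin n → M, Submodule.span R (Set.range f) = N

end GenDefs

end CSRickartPaper

section Independence

variable {α : Type*} [CompleteLattice α] {ι : Type*} [DecidableEq ι] {f : ι → α} {j : ι} {a : α}

theorem iSup_update_of_eq_bot (hj : f j = ⊥) : ⨆ i, Function.update f j a i = a ⊔ ⨆ i, f i := by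
  refine le_antisymm (iSup_le fun i ↦ ?_) (sup_le (le_iSup_of_le j (by simp)) (iSup_le fun i ↦ ?_))
  · rcases eq_or_ne i j with rfl | hij
    · simp
    · simpa [hij] using le_sup_of_le_right (le_iSup f i)
  · rcases eq_or_ne i j with rfl | hij
    · simp [hj]
    · exact le_iSup_of_le i (by simp [hij])

theorem iSupIndep.update [IsModularLattice α] (hf : iSupIndep f) (hj : f j = ⊥)
    (ha : Disjoint a (⨆ i, f i)) : iSupIndep (Function.update f j a) := by
  rw [iSupIndep_def]
  intro i
  rcases eq_or_ne i j with rfl | hij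
  · refine (Function.update_self i a f).symm ▸ ha.mono_right (iSup₂_le fun k hk ↦ ?_)
    simpa [hk] using le_iSup f k
  · have hle : ⨆ (k) (_ : k ≠ i), Function.update f j a k ≤ (⨆ (k) (_ : k ≠ i), f k) ⊔ a := by
      refine iSup₂_le fun k hk ↦ ?_
      rcases eq_or_ne k j with rfl | hkj
      · simp
      · exact (Function.update_of_ne hkj a f).symm ▸
          le_sup_of_le_left (le_iSup₂_of_le (f := fun k (_ : k ≠ i) ↦ f k) k hk le_rfl)
    rw [Function.update_of_ne hij]
    refine ((hf i).disjoint_sup_right_of_disjoint_sup_left ?_).mono_right hle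
    exact ha.symm.mono_left (sup_le (le_iSup f i) (iSup₂_le fun k _ ↦ le_iSup f k))

end Independence

namespace CSRickartPaper

universe u

open LinearMap Submodule

section Essential

variable {R : Type*} [Ring R] {M : Type*} [AddCommGroup M] [Module R M]
  {M' : Type*} [AddCommGroup M'] [Module R M'] {A A' B C : Submodule R M}

theorem EssentialIn.of_subsingleton [Subsingleton M] (A B : Submodule R M) : EssentialIn A B :=
  ⟨fun x _ ↦ Subsingleton.elim x 0 ▸ B.zero_mem, fun K _ _ ↦ Subsingleton.elim K ⊥⟩

theorem essentialIn_iff_exists_smul :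
    EssentialIn A B ↔ A ≤ B ∧ ∀ x ∈ B, x ≠ 0 → ∃ r : R, r • x ∈ A ∧ r • x ≠ 0 := by
  refine ⟨fun h ↦ ⟨h.1, fun x hx hx0 ↦ ?_⟩, fun h ↦ ⟨h.1, fun K hK hAK ↦ ?_⟩⟩
  · by_contra! hr
    have hAx : A ⊓ (R ∙ x) = ⊥ := eq_bot_iff.2 fun y ⟨hyA, hyx⟩ ↦ by
      obtain ⟨r, rfl⟩ := mem_span_singleton.1 hyx
      exact (mem_bot R).2 (hr r hyA)
    exact hx0 (span_singleton_eq_bot.1 (h.2 _ ((span_singleton_le_iff_mem x B).2 hx) hAx))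
  · refine eq_bot_iff.2 fun x hx ↦ (mem_bot R).2 (by_contra fun hx0 ↦ ?_)
    obtain ⟨r, hrA, hr0⟩ := h.2 x (hK hx) hx0
    exact hr0 ((mem_bot R).1 (hAK ▸ ⟨hrA, K.smul_mem r hx⟩))

theorem essentialIn_top_top : EssentialIn (⊤ : Submodule R M) ⊤ :=
  ⟨le_rfl, fun K _ h ↦ by rwa [top_inf_eq] at h⟩

theorem EssentialIn.trans (h₁ : EssentialIn A B) (h₂ : EssentialIn B C) : EssentialIn A C := by
  refine ⟨h₁.1.trans h₂.1, fun K hK hAK ↦ h₂.2 K hK (h₁.2 (B ⊓ K) inf_le_left ?_)⟩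
  rwa [← inf_assoc, inf_eq_left.2 h₁.1]

theorem EssentialIn.inf_of_le (h : EssentialIn A B) (hC : C ≤ B) : EssentialIn (A ⊓ C) C := by
  refine ⟨inf_le_right, fun K hK hAK ↦ h.2 K (hK.trans hC) ?_⟩
  rwa [inf_assoc, inf_eq_right.2 hK] at hAK

theorem EssentialIn.inf (h : EssentialIn A B) (h' : EssentialIn A' B) : EssentialIn (A ⊓ A') B := by
  refine ⟨inf_le_left.trans h.1, fun K hK hAK ↦ h'.2 K hK (h.2 (A' ⊓ K) (inf_le_right.trans hK) ?_)⟩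
  rwa [← inf_assoc]

theorem essentialIn_iInf_top {ι : Type*} [Finite ι] {A : ι → Submodule R M}
    (h : ∀ i, EssentialIn (A i) ⊤) : EssentialIn (⨅ i, A i) ⊤ := by
  have := Fintype.ofFinite ι
  rw [← Finset.inf_univ_eq_iInf]
  exact Finset.inf_induction (p := (EssentialIn · ⊤)) essentialIn_top_top
    (fun _ h₁ _ h₂ ↦ h₁.inf h₂) fun i _ ↦ h i

theorem EssentialIn.comap_of_injective {σ : M' →ₗ[R] M} (hσ : Function.Injective σ)
    (h : EssentialIn A B) : EssentialIn (A.comap σ) (B.comap σ) := by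
  refine essentialIn_iff_exists_smul.2 ⟨comap_mono h.1, fun x hx hx0 ↦ ?_⟩
  obtain ⟨r, hrA, hr0⟩ := (essentialIn_iff_exists_smul.1 h).2 (σ x) hx
    ((map_ne_zero_iff σ hσ).2 hx0)
  exact ⟨r, by simpa using hrA, fun h0 ↦ hr0 (by rw [← map_smul, h0, map_zero])⟩

theorem EssentialIn.comap_toSpanSingleton (h : EssentialIn A B) {u : M} (hu : u ∈ B) :
    EssentialIn (A.comap (toSpanSingleton R M u)) ⊤ := by
  refine essentialIn_iff_exists_smul.2 ⟨le_top, fun s _ hs0 ↦ ?_⟩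
  by_cases hsu : s • u = 0
  · exact ⟨1, by simp [hsu], by simpa using hs0⟩
  obtain ⟨t, htA, ht0⟩ := (essentialIn_iff_exists_smul.1 h).2 (s • u) (B.smul_mem s hu) hsu
  refine ⟨t, by simpa [mul_smul] using htA, fun h0 ↦ ht0 ?_⟩
  rw [← mul_smul, ← smul_eq_mul, h0, zero_smul]

end Essential

section Summand

variable {R : Type*} [Ring R] {M : Type*} [AddCommGroup M] [Module R M]
  {M' : Type*} [AddCommGroup M'] [Module R M'] {N : Type*} [AddCommGroup N] [Module R N]

def EssentialInSummand (A : Submodule R M) : Prop :=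
  ∃ D : Submodule R M, IsDirectSummand D ∧ EssentialIn A D

theorem essentialInSummand_iff {A : Submodule R M} :
    EssentialInSummand A ↔ ∃ e : Module.End R M, IsIdempotentElem e ∧ EssentialIn A (range e) := by
  constructor
  · rintro ⟨D, ⟨C, hDC⟩, h⟩
    exact ⟨D.projection C hDC, isIdempotentElem_projection hDC, (range_projection hDC).symm ▸ h⟩
  · rintro ⟨e, he, h⟩
    exact ⟨range e, ⟨ker e, LinearMap.IsIdempotentElem.isCompl he⟩, h⟩

theorem isRelCSRickart_iff :
    IsRelCSRickart R M N ↔ ∀ φ : M →ₗ[R] N, EssentialInSummand (ker φ) := by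
  simp only [IsRelCSRickart, essentialInSummand_iff]

theorem isCompl_range_ker_of_comp_eq_id {σ : M' →ₗ[R] M} {π : M →ₗ[R] M'}
    (h : π ∘ₗ σ = LinearMap.id) : IsCompl (range σ) (ker π) := by
  have hπσ (x : M') : π (σ x) = x := congr($h x)
  have hτ : IsIdempotentElem (σ ∘ₗ π) := LinearMap.ext fun x ↦ by simp [hπσ]
  have hrange : range (σ ∘ₗ π) = range σ :=
    range_comp_of_range_eq_top σ (range_eq_top.2 fun x ↦ ⟨σ x, hπσ x⟩)
  have hker : ker (σ ∘ₗ π) = ker π :=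
    ker_comp_of_ker_eq_bot π (ker_eq_bot.2 fun a b hab ↦ by rw [← hπσ a, hab, hπσ])
  simpa [hrange, hker] using LinearMap.IsIdempotentElem.isCompl hτ

theorem IsDirectSummand.comap_of_le_range {σ : M' →ₗ[R] M} (hσ : Function.Injective σ)
    {D : Submodule R M} (hD : IsDirectSummand D) (hDσ : D ≤ range σ) :
    IsDirectSummand (D.comap σ) := by
  obtain ⟨C, hDC⟩ := hD
  refine ⟨C.comap σ, ?_, ?_⟩
  · rw [disjoint_iff, ← comap_inf, hDC.inf_eq_bot, comap_bot, ker_eq_bot.2 hσ]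
  · refine codisjoint_iff.2 (eq_top_iff.2 fun x _ ↦ ?_)
    obtain ⟨d, hd, c, hc, hdc⟩ := mem_sup.1 (hDC.sup_eq_top ▸ mem_top : σ x ∈ D ⊔ C)
    obtain ⟨y, rfl⟩ := hDσ hd
    refine mem_sup.2 ⟨y, hd, x - y, ?_, add_sub_cancel y x⟩
    rwa [mem_comap, map_sub, ← hdc, add_sub_cancel_left]

theorem EssentialInSummand.exists_le_of_sup {U V A : Submodule R M} (hUV : IsCompl U V)
    (hA : A ≤ U) (h : EssentialInSummand (A ⊔ V)) :
    ∃ D, IsDirectSummand D ∧ D ≤ U ∧ EssentialIn A D := by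
  obtain ⟨D, ⟨C, hDC⟩, hess⟩ := h
  have hD : D ⊓ U ⊔ V = D := by
    rw [inf_sup_assoc_of_le U (le_sup_right.trans hess.1), hUV.sup_eq_top, inf_top_eq]
  have hA' : (A ⊔ V) ⊓ (D ⊓ U) = A := by
    rw [inf_comm D U, ← inf_assoc, sup_inf_assoc_of_le V hA, hUV.symm.inf_eq_bot, sup_bot_eq,
      inf_eq_left.2 (le_sup_left.trans hess.1)]
  exact ⟨D ⊓ U, ⟨V ⊔ C, (hUV.disjoint.mono_left inf_le_right).isCompl_sup_right_of_isCompl_sup_left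
    (by rwa [hD])⟩, inf_le_right, hA' ▸ hess.inf_of_le inf_le_left⟩

theorem IsCSRickart.of_retract (hM : IsCSRickart R M) (σ : M' →ₗ[R] M) (π : M →ₗ[R] M')
    (hπσ : π ∘ₗ σ = LinearMap.id) : IsCSRickart R M' := by
  have hπσ' (x : M') : π (σ x) = x := congr($hπσ x)
  have hσ : Function.Injective σ := fun a b hab ↦ by rw [← hπσ' a, hab, hπσ']
  have hker (φ : Module.End R M') : ker (σ ∘ₗ φ ∘ₗ π) = (ker φ).map σ ⊔ ker π := by
    rw [ker_comp_of_ker_eq_bot _ (ker_eq_bot.2 hσ), ker_comp]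
    refine le_antisymm (fun x hx ↦ mem_sup.2
      ⟨σ (π x), mem_map_of_mem (f := σ) (mem_comap.1 hx), x - σ (π x), ?_, ?_⟩) ?_
    · simp [hπσ']
    · abel
    · refine sup_le ?_ fun x hx ↦ ?_
      · rintro _ ⟨y, hy, rfl⟩
        simpa [hπσ'] using hy
      · simp [mem_ker.1 hx]
  intro φ
  obtain ⟨D, hD, hDσ, hess⟩ := EssentialInSummand.exists_le_of_sup
    (isCompl_range_ker_of_comp_eq_id hπσ) (map_le_range (f := σ))
    (hker φ ▸ essentialInSummand_iff.2 (hM (σ ∘ₗ φ ∘ₗ π)))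
  refine essentialInSummand_iff.1 ⟨D.comap σ, hD.comap_of_le_range hσ hDσ, ?_⟩
  simpa [comap_map_eq_of_injective hσ] using hess.comap_of_injective hσ

end Summand

section Relative

variable {R : Type*} [Ring R] {M : Type*} [AddCommGroup M] [Module R M]
  {N : Type*} [AddCommGroup N] [Module R N] {N' : Type*} [AddCommGroup N'] [Module R N']

theorem IsRelCSRickart.of_subsingleton [Subsingleton M] : IsRelCSRickart R M N :=
  fun _ ↦ ⟨1, .one, EssentialIn.of_subsingleton _ _⟩

theorem IsRelCSRickart.of_injective (h : IsRelCSRickart R M N') {ι : N →ₗ[R] N'}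
    (hι : Function.Injective ι) : IsRelCSRickart R M N := fun φ ↦ by
  simpa [ker_comp_of_ker_eq_bot φ (ker_eq_bot.2 hι)] using h (ι ∘ₗ φ)

theorem EssentialInSummand.inf_ker (h : IsRelCSRickart R M N) {A : Submodule R M}
    (hA : EssentialInSummand A) (φ : M →ₗ[R] N) : EssentialInSummand (A ⊓ ker φ) := by
  obtain ⟨e, he, hAe⟩ := essentialInSummand_iff.1 hA
  have hee (x : M) : e (e x) = e x := congr($he.eq x)
  have hker : ker (φ ∘ₗ e) = ker φ ⊓ range e ⊔ ker e := by
    refine le_antisymm (fun x hx ↦ ?_) (sup_le ?_ fun x hx ↦ by simp [mem_ker.1 hx])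
    · exact mem_sup.2 ⟨e x, ⟨hx, x, rfl⟩, x - e x, by simp [hee], by abel⟩
    · rintro _ ⟨hx, x, rfl⟩
      simpa [hee] using hx
  obtain ⟨D, hD, -, hess⟩ := EssentialInSummand.exists_le_of_sup
    (LinearMap.IsIdempotentElem.isCompl he) inf_le_right
    (hker ▸ isRelCSRickart_iff.1 h (φ ∘ₗ e))
  refine ⟨D, hD, ?_⟩
  rw [← inf_eq_left.2 (inf_le_left.trans hAe.1 : A ⊓ ker φ ≤ range e), inf_assoc]
  exact (hAe.inf_of_le inf_le_right).trans hess

theorem IsRelCSRickart.pi {ι : Type*} [Finite ι] (h : IsRelCSRickart R M N) :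
    IsRelCSRickart R M (ι → N) := by
  classical
  have := Fintype.ofFinite ι
  refine isRelCSRickart_iff.2 fun φ ↦ ?_
  have hker : ker φ = ⨅ i ∈ Finset.univ, ker (proj i ∘ₗ φ) := by
    ext x
    simp [funext_iff]
  rw [hker]
  induction (Finset.univ : Finset ι) using Finset.induction_on with
  | empty => simpa using ⟨⊤, ⟨⊥, isCompl_top_bot⟩, essentialIn_top_top⟩
  | insert j s _ ih =>
    rw [Finset.iInf_insert, inf_comm]
    exact ih.inf_ker h _

end Relative

section Singular

variable {R : Type*} [Ring R] {M : Type*} [AddCommGroup M] [Module R M]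
  {M' : Type*} [AddCommGroup M'] [Module R M']

variable (R) in
def IsSingularElem (x : M) : Prop :=
  EssentialIn (ker (toSpanSingleton R M x)) ⊤

theorem ker_toSpanSingleton_apply (f : M →ₗ[R] M') (x : M) :
    ker (toSpanSingleton R M' (f x)) = (ker f).comap (toSpanSingleton R M x) := by
  ext r
  simp

theorem isSingularElem_apply_iff {f : M →ₗ[R] M'} (hf : Function.Injective f) {x : M} :
    IsSingularElem R (f x) ↔ IsSingularElem R x := by
  rw [IsSingularElem, ker_toSpanSingleton_apply, ker_eq_bot.2 hf]
  rfl

theorem isSingularModule_iff_forall_mem {S : Submodule R M} :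
    IsSingularModule R S ↔ ∀ x ∈ S, IsSingularElem R x := by
  simp only [IsSingularModule, Subtype.forall]
  exact forall₂_congr fun x hx ↦
    (isSingularElem_apply_iff (f := S.subtype) S.injective_subtype (x := ⟨x, hx⟩)).symm

theorem IsSingularElem.pi {ι : Type*} [Finite ι] {y : ι → M} (h : ∀ i, IsSingularElem R (y i)) :
    IsSingularElem R y := by
  have hker : ker (toSpanSingleton R (ι → M) y) = ⨅ i, ker (toSpanSingleton R M (y i)) := by
    ext r
    simp [funext_iff]
  rw [IsSingularElem, hker]
  exact essentialIn_iInf_top h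

theorem isSingularModule_map_of_essentialIn_ker {φ : M →ₗ[R] M'} {D : Submodule R M}
    (h : EssentialIn (ker φ) D) : IsSingularModule R (D.map φ) := by
  refine isSingularModule_iff_forall_mem.2 ?_
  rintro _ ⟨u, hu, rfl⟩
  rw [IsSingularElem, ker_toSpanSingleton_apply]
  exact h.comap_toSpanSingleton hu

end Singular

section Free

variable {R : Type*} [Ring R] {ι : Type*} [Fintype ι] [DecidableEq ι]
  {P : Type*} [AddCommGroup P] [Module R P] {N : Type*} [AddCommGroup N] [Module R N]

theorem essentialIn_top_of_forall_single {A : Submodule R (ι → R)}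
    (h : ∀ i, EssentialIn (A.comap (LinearMap.single R (fun _ ↦ R) i)) ⊤) : EssentialIn A ⊤ := by
  refine essentialIn_iff_exists_smul.2 ⟨le_top, fun x _ hx ↦ ?_⟩
  have key (s : Finset ι) : ∃ r : R, r • x ≠ 0 ∧ ∀ i ∈ s, Pi.single i (r * x i) ∈ A := by
    induction s using Finset.induction_on with
    | empty => exact ⟨1, by simpa using hx, by simp⟩
    | insert j s _ ih =>
      obtain ⟨r, hr, hs⟩ := ih
      by_cases hj : r * x j = 0
      · exact ⟨r, hr, by simpa [hj] using hs⟩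
      obtain ⟨t, ht, ht0⟩ := (essentialIn_iff_exists_smul.1 (h j)).2 (r * x j) trivial hj
      refine ⟨t * r, fun h0 ↦ ht0 ?_, ?_⟩
      · simpa [mul_assoc] using congr_fun h0 j
      · simp only [Finset.forall_mem_insert]
        refine ⟨by simpa [mul_assoc] using ht, fun i hi ↦ ?_⟩
        rw [mul_assoc, ← smul_eq_mul, Pi.single_smul]
        exact A.smul_mem t (hs i hi)
  obtain ⟨r, hr, hA⟩ := key Finset.univ
  refine ⟨r, ?_, hr⟩
  rw [← Finset.univ_sum_single (r • x)]
  exact A.sum_mem fun i _ ↦ by simpa using hA i (Finset.mem_univ i)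

theorem essentialIn_ker_of_isSingularElem {φ : (ι → R) →ₗ[R] N} {g : (ι → R) →ₗ[R] P}
    {σ : P →ₗ[R] ι → R} (hgσ : g ∘ₗ σ = LinearMap.id) (hφg : ker φ ≤ ker g)
    (hsing : ∀ k ∈ ker g, IsSingularElem R (φ k)) : EssentialIn (ker φ) (ker g) := by
  have hgσ' (p : P) : g (σ p) = p := congr($hgσ p)
  -- `x ↦ x - σ (g x)` is the projection onto `ker g` along `range σ`
  have hmem (x : ι → R) : x ∈ ker φ ⊔ range σ ↔ x - σ (g x) ∈ ker φ := by
    refine ⟨fun hx ↦ ?_, fun hx ↦ mem_sup.2 ⟨_, hx, σ (g x), ⟨g x, rfl⟩, sub_add_cancel x _⟩⟩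
    obtain ⟨a, ha, _, ⟨p, rfl⟩, rfl⟩ := mem_sup.1 hx
    simpa [hgσ', mem_ker.1 (hφg ha)] using ha
  have hess : EssentialIn (ker φ ⊔ range σ) ⊤ := by
    refine essentialIn_top_of_forall_single fun i ↦ ?_
    set k : ι → R := Pi.single i 1 - σ (g (Pi.single i 1))
    have hk : (ker φ ⊔ range σ).comap (LinearMap.single R (fun _ ↦ R) i) =
        ker (toSpanSingleton R N (φ k)) := by
      ext r
      have : Pi.single i r = r • (Pi.single i 1 : ι → R) := by simp [← Pi.single_smul]
      simp [hmem, k, this, smul_sub]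
    rw [hk]
    exact hsing k (by simp [k, hgσ'])
  have hinf : (ker φ ⊔ range σ) ⊓ ker g = ker φ := by
    rw [sup_inf_assoc_of_le _ hφg, (isCompl_range_ker_of_comp_eq_id hgσ).inf_eq_bot, sup_bot_eq]
  simpa [hinf] using hess.inf_of_le (le_top : ker g ≤ ⊤)

end Free

section Decomposition

variable {R : Type*} [Ring R] {M : Type*} [AddCommGroup M] [Module R M]
  {M' : Type*} [AddCommGroup M'] [Module R M'] {F : Type*} [AddCommGroup F] [Module R F]

theorem nGen_iff_exists_range_eq {n : ℕ} {N : Submodule R M} :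
    NGen n N ↔ ∃ f : (Fin n → R) →ₗ[R] M, range f = N := by
  constructor
  · rintro ⟨v, rfl⟩
    exact ⟨Fintype.linearCombination R v, Fintype.range_linearCombination R v⟩
  · rintro ⟨f, rfl⟩
    refine ⟨fun i ↦ f (Pi.single i 1), ?_⟩
    rw [range_eq_map, ← (Pi.basisFun R (Fin n)).span_eq, Submodule.map_span, ← Set.range_comp]
    simp [Function.comp_def]

theorem nGen_range {n : ℕ} (f : (Fin n → R) →ₗ[R] M) : NGen n (range f) :=
  nGen_iff_exists_range_eq.2 ⟨f, rfl⟩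

def HasProjSingularDecomp (I : Submodule R M) : Prop :=
  ∃ P S : Submodule R M, Module.Projective R P ∧ IsSingularModule R S ∧ P ⊓ S = ⊥ ∧ P ⊔ S = I

theorem projective_map_of_disjoint_ker {C : Submodule R M} [Module.Projective R C]
    {φ : M →ₗ[R] M'} (hC : Disjoint C (ker φ)) : Module.Projective R (C.map φ) := by
  have hinj : Function.Injective (φ.domRestrict C) :=
    ker_eq_bot.1 (by rwa [ker_domRestrict, ← disjoint_iff_comap_eq_bot])
  exact .of_equiv ((LinearEquiv.ofInjective _ hinj).trans
    (LinearEquiv.ofEq _ _ (range_domRestrict C φ)))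

theorem hasProjSingularDecomp_range [Module.Projective R M] {φ : M →ₗ[R] M'}
    (h : EssentialInSummand (ker φ)) : HasProjSingularDecomp (range φ) := by
  obtain ⟨D, ⟨C, hDC⟩, hess⟩ := h
  have : Module.Projective R C :=
    .of_split C.subtype (C.projectionOnto D hDC.symm) (by ext; simp)
  refine ⟨C.map φ, D.map φ, projective_map_of_disjoint_ker (hDC.symm.disjoint.mono_right hess.1),
    isSingularModule_map_of_essentialIn_ker hess, eq_bot_iff.2 ?_, ?_⟩
  · rintro _ ⟨⟨c, hc, rfl⟩, d, hd, hdc⟩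
    have hcD : c ∈ D := by
      simpa using D.add_mem (hess.1 (show c - d ∈ ker φ by simp [hdc])) hd
    simp [(mem_bot R).1 (hDC.inf_eq_bot ▸ mem_inf.2 ⟨hcD, hc⟩)]
  · rw [← Submodule.map_sup, sup_comm, hDC.sup_eq_top, Submodule.map_top]

theorem exists_surjective_ker_eq {f : F →ₗ[R] M} {P S : Submodule R M} (hPS : P ⊓ S = ⊥)
    (hsup : P ⊔ S = range f) :
    ∃ g : F →ₗ[R] P, Function.Surjective g ∧ ker g = S.comap f := by
  have hinj : Function.Injective (S.mkQ ∘ₗ P.subtype) := by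
    rw [← ker_eq_bot, ker_comp, ker_mkQ, ← disjoint_iff_comap_eq_bot, disjoint_iff, hPS]
  have hrange : range (S.mkQ ∘ₗ P.subtype) = range (S.mkQ ∘ₗ f) := by
    rw [range_comp, range_comp, range_subtype, ← hsup, Submodule.map_sup, mkQ_map_self, sup_bot_eq]
  let e := (LinearEquiv.ofInjective _ hinj).trans (LinearEquiv.ofEq _ _ hrange)
  refine ⟨e.symm.toLinearMap ∘ₗ (S.mkQ ∘ₗ f).rangeRestrict,
    e.symm.surjective.comp (surjective_rangeRestrict _), ?_⟩
  rw [LinearEquiv.ker_comp, ker_rangeRestrict, ker_comp, ker_mkQ]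

theorem isRelCSRickart_of_hasProjSingularDecomp {ι : Type*} [Fintype ι] [DecidableEq ι]
    (h : ∀ φ : (ι → R) →ₗ[R] M, HasProjSingularDecomp (range φ)) :
    IsRelCSRickart R (ι → R) M := by
  refine isRelCSRickart_iff.2 fun φ ↦ ?_
  obtain ⟨P, S, hP, hS, hPS, hsup⟩ := h φ
  obtain ⟨g, hg, hker⟩ := exists_surjective_ker_eq hPS hsup
  obtain ⟨σ, hσ⟩ := g.exists_rightInverse_of_surjective (range_eq_top.2 hg)
  refine ⟨ker g, ⟨range σ, (isCompl_range_ker_of_comp_eq_id hσ).symm⟩,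
    essentialIn_ker_of_isSingularElem hσ (fun x hx ↦ ?_) fun k hk ↦ ?_⟩
  · simp [hker, mem_ker.1 hx]
  · rw [hker] at hk
    exact isSingularModule_iff_forall_mem.1 hS _ hk

end Decomposition

section SplitCoordinates

variable {R : Type*} [Ring R] {M : Type*} [AddCommGroup M] [Module R M] {n : ℕ}

def HasIdealProjSingularDecomp (ι : Type*) (N : Submodule R M) : Prop :=
  ∃ (P : ι → Submodule R M) (S : Submodule R M),
    iSupIndep (fun o : Option ι => o.elim S P) ∧ ((⨆ i, P i) ⊔ S = N) ∧
    (∀ i, Module.Projective R (P i) ∧ ∃ J : Submodule R R, Nonempty ((P i) ≃ₗ[R] J)) ∧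
    IsSingularModule R S

theorem exists_split_off_projective
    (h4 : ∀ I : Submodule R R, NGen n I → HasProjSingularDecomp I)
    (ψ : (Fin n → R) →ₗ[R] M) (π : M →ₗ[R] R) :
    ∃ (ψ' : (Fin n → R) →ₗ[R] M) (Q : Submodule R M), Disjoint Q (range ψ') ∧
      Q ⊔ range ψ' = range ψ ∧ Module.Projective R Q ∧
      (∃ J : Submodule R R, Nonempty (Q ≃ₗ[R] J)) ∧ ∀ y ∈ range ψ', IsSingularElem R (π y) := by
  obtain ⟨P, S, hP, hS, hPS, hsup⟩ := h4 _ (nGen_range (π ∘ₗ ψ))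
  obtain ⟨g, hg, hker⟩ := exists_surjective_ker_eq hPS hsup
  obtain ⟨σ, hσ⟩ := g.exists_rightInverse_of_surjective (range_eq_top.2 hg)
  have hgσ (p : P) : g (σ p) = p := congr($hσ p)
  have hψg {x : Fin n → R} (hx : ψ x = 0) : g x = 0 := by simp [← mem_ker, hker, hx]
  have hinj : Function.Injective (ψ ∘ₗ σ) := fun a b hab ↦ by
    simpa [hgσ, sub_eq_zero] using hψg (x := σ a - σ b) (by simpa [sub_eq_zero] using hab)
  refine ⟨ψ ∘ₗ (LinearMap.id - σ ∘ₗ g), range (ψ ∘ₗ σ), disjoint_iff.2 (eq_bot_iff.2 ?_), ?_,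
    .of_equiv (LinearEquiv.ofInjective _ hinj), ⟨P, ⟨(LinearEquiv.ofInjective _ hinj).symm⟩⟩, ?_⟩
  · rintro _ ⟨⟨p, rfl⟩, x, hx⟩
    have := hψg (x := σ p - (x - σ (g x))) (by simpa [sub_eq_zero] using hx.symm)
    simp only [map_sub, hgσ, sub_self, sub_zero] at this
    simp [this]
  · refine le_antisymm (sup_le (range_comp_le_range _ _) (range_comp_le_range _ _)) ?_
    rintro _ ⟨x, rfl⟩
    exact mem_sup.2 ⟨ψ (σ (g x)), ⟨g x, rfl⟩, ψ (x - σ (g x)), ⟨x, rfl⟩, by simp⟩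
  · rintro _ ⟨x, rfl⟩
    have : x - σ (g x) ∈ ker g := by simp [hgσ]
    rw [hker] at this
    exact isSingularModule_iff_forall_mem.1 hS _ this

variable {ι : Type*} [Fintype ι] [DecidableEq ι]

/- Induction on the set `s` of coordinates whose projective part is not yet split off; the
remaining coordinates of `range ψ` are already singular. -/
theorem exists_decomp_of_forall_notMem_isSingularElem
    (h4 : ∀ I : Submodule R R, NGen n I → HasProjSingularDecomp I) (s : Finset ι) :
    ∀ ψ : (Fin n → R) →ₗ[R] ι → R, (∀ y ∈ range ψ, ∀ i ∉ s, IsSingularElem R (y i)) →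
      ∃ F : Option ι → Submodule R (ι → R), iSupIndep F ∧ ⨆ o, F o = range ψ ∧
        (∀ i ∉ s, F (some i) = ⊥) ∧
        (∀ i, Module.Projective R (F (some i)) ∧
          ∃ J : Submodule R R, Nonempty (F (some i) ≃ₗ[R] J)) ∧
        IsSingularModule R (F none) := by
  induction s using Finset.induction_on with
  | empty =>
    intro ψ hψ
    refine ⟨Function.update ⊥ none (range ψ), iSupIndep.update (fun _ ↦ disjoint_bot_left) rfl
      (by simp), by simp [iSup_update_of_eq_bot], fun i _ ↦ by simp, fun i ↦ ?_, ?_⟩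
    · rw [Function.update_of_ne (Option.some_ne_none i), Pi.bot_apply]
      exact ⟨inferInstance, ⊥, ⟨LinearEquiv.ofSubsingleton _ _⟩⟩
    · simpa [isSingularModule_iff_forall_mem] using
        fun y hy ↦ IsSingularElem.pi fun i ↦ hψ y hy i (Finset.notMem_empty i)
  | insert j s hj ih =>
    intro ψ hψ
    obtain ⟨ψ', Q, hdisj, hsup, hQ, hQJ, hsing⟩ := exists_split_off_projective h4 ψ (proj j)
    have hle : range ψ' ≤ range ψ := hsup ▸ le_sup_right
    obtain ⟨F, hind, hF, hbot, hP, hS⟩ := ih ψ' fun y hy i hi ↦ by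
      rcases eq_or_ne i j with rfl | hij
      · exact hsing y hy
      · exact hψ y (hle hy) i (by simp [hij, hi])
    refine ⟨Function.update F (some j) Q, hind.update (hbot j hj) (hF ▸ hdisj), ?_, ?_, ?_, ?_⟩
    · rw [iSup_update_of_eq_bot (hbot j hj), hF, hsup]
    · intro i hi
      simp only [Finset.mem_insert, not_or] at hi
      simpa [hi.1] using hbot i hi.2
    · intro i
      rcases eq_or_ne i j with rfl | hij
      · rw [Function.update_self]
        exact ⟨hQ, hQJ⟩
      · rw [Function.update_of_ne (Option.some_injective _ |>.ne hij)]
        exact hP i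
    · rwa [Function.update_of_ne (Option.some_ne_none j).symm]

theorem hasIdealProjSingularDecomp_range
    (h4 : ∀ I : Submodule R R, NGen n I → HasProjSingularDecomp I)
    (ψ : (Fin n → R) →ₗ[R] ι → R) : HasIdealProjSingularDecomp ι (range ψ) := by
  obtain ⟨F, hind, hsup, -, hP, hS⟩ :=
    exists_decomp_of_forall_notMem_isSingularElem h4 Finset.univ ψ (by simp)
  have hF : (fun o : Option ι ↦ o.elim (F none) (F ∘ some)) = F :=
    funext fun o ↦ by cases o <;> rfl
  refine ⟨F ∘ some, F none, hF ▸ hind, ?_, hP, hS⟩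
  rw [sup_comm]
  exact (iSup_option F).symm.trans hsup

end SplitCoordinates

section Pullback

variable {R : Type*} [Ring R] {M : Type*} [AddCommGroup M] [Module R M]
  {M' : Type*} [AddCommGroup M'] [Module R M']

theorem hasProjSingularDecomp_bot : HasProjSingularDecomp (⊥ : Submodule R M) := by
  refine ⟨⊥, ⊥, inferInstance, isSingularModule_iff_forall_mem.2 fun x hx ↦ ?_, by simp, by simp⟩
  rw [(mem_bot R).1 hx, IsSingularElem, toSpanSingleton_zero, ker_zero]
  exact essentialIn_top_top

theorem projective_iSup {ι : Type*} {P : ι → Submodule R M} (hind : iSupIndep P)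
    [∀ i, Module.Projective R (P i)] : Module.Projective R ↥(⨆ i, P i) := by
  classical
  exact .of_equiv ((LinearEquiv.ofInjective _ hind.dfinsupp_lsum_injective).trans
    (LinearEquiv.ofEq _ _ (iSup_eq_range_dfinsupp_lsum P).symm))

theorem HasIdealProjSingularDecomp.hasProjSingularDecomp {ι : Type*} {N : Submodule R M}
    (h : HasIdealProjSingularDecomp ι N) : HasProjSingularDecomp N := by
  obtain ⟨P, S, hind, hsup, hP, hS⟩ := h
  have := fun i ↦ (hP i).1
  refine ⟨⨆ i, P i, S, projective_iSup (hind.comp (Option.some_injective _)), hS, ?_, hsup⟩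
  refine disjoint_iff.1 ((hind none).mono_right (iSup_le fun i ↦ ?_)).symm
  exact le_iSup₂_of_le (f := fun o (_ : o ≠ none) ↦ o.elim S P) (some i) (Option.some_ne_none i)
    le_rfl

theorem HasProjSingularDecomp.of_map {ι : M →ₗ[R] M'} (hι : Function.Injective ι)
    {I : Submodule R M} (h : HasProjSingularDecomp (I.map ι)) : HasProjSingularDecomp I := by
  obtain ⟨P, S, hP, hS, hPS, hsup⟩ := h
  have hPι : P ≤ range ι := le_sup_left.trans (hsup ▸ map_le_range)
  have hSι : S ≤ range ι := le_sup_right.trans (hsup ▸ map_le_range)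
  refine ⟨P.comap ι, S.comap ι, .of_equiv ((equivMapOfInjective ι hι _).trans
    (LinearEquiv.ofEq _ _ (map_comap_eq_of_le hPι))).symm,
    isSingularModule_iff_forall_mem.2 fun x hx ↦ ?_, ?_, ?_⟩
  · exact (isSingularElem_apply_iff hι).1 (isSingularModule_iff_forall_mem.1 hS _ hx)
  · rw [← comap_inf, hPS, comap_bot, ker_eq_bot.2 hι]
  · apply map_injective_of_injective hι
    rw [Submodule.map_sup, map_comap_eq_of_le hPι, map_comap_eq_of_le hSι, hsup]

theorem hasProjSingularDecomp_of_nGen {n : ℕ}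
    (h6 : ∀ N : Submodule R (Fin n → R), NGen n N → HasIdealProjSingularDecomp (Fin n) N)
    {I : Submodule R R} (hI : NGen n I) : HasProjSingularDecomp I := by
  obtain ⟨f, rfl⟩ := nGen_iff_exists_range_eq.1 hI
  rcases isEmpty_or_nonempty (Fin n) with hn | ⟨⟨i⟩⟩
  · rw [Subsingleton.elim f 0, range_zero]
    exact hasProjSingularDecomp_bot
  · let ι := LinearMap.single R (fun _ : Fin n ↦ R) i
    refine HasProjSingularDecomp.of_map (ι := ι) (Pi.single_injective (M := fun _ ↦ R) i)
      (h6 _ ?_).hasProjSingularDecomp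
    rw [← range_comp]
    exact nGen_range _

end Pullback

section Matrix

variable {R : Type*} [Ring R] {ι : Type*} [Fintype ι] [DecidableEq ι]

def rowsIdeal (N : Submodule R (ι → R)) : Submodule (Matrix ι ι R) (Matrix ι ι R) where
  carrier := {X | ∀ i, X i ∈ N}
  add_mem' hX hY i := N.add_mem (hX i) (hY i)
  zero_mem' _ := N.zero_mem
  smul_mem' B X hX i := by
    rw [smul_eq_mul, Matrix.mul_apply_eq_vecMul, Matrix.vecMul_eq_sum]
    exact N.sum_mem fun j _ ↦ N.smul_mem _ (hX j)

theorem mem_rowsIdeal {N : Submodule R (ι → R)} {X : Matrix ι ι R} :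
    X ∈ rowsIdeal N ↔ ∀ i, X i ∈ N := Iff.rfl

theorem annElem_eq_rowsIdeal (A : Matrix ι ι R) :
    annElem _ A = rowsIdeal (ker A.toLinearMapRight') := by
  ext X
  simp only [annElem, mem_ker, toSpanSingleton_apply, smul_eq_mul, mem_rowsIdeal,
    Matrix.toLinearMapRight'_apply, ← Matrix.mul_apply_eq_vecMul]
  exact ⟨fun h i ↦ by rw [h]; rfl, funext⟩

theorem idealGen_eq_rowsIdeal (E : Matrix ι ι R) :
    idealGen _ E = rowsIdeal (range E.toLinearMapRight') := by
  ext X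
  simp only [idealGen, mem_range, toSpanSingleton_apply, smul_eq_mul, mem_rowsIdeal,
    Matrix.toLinearMapRight'_apply]
  refine ⟨?_, fun h ↦ ?_⟩
  · rintro ⟨Y, rfl⟩ i
    exact ⟨Y i, (Matrix.mul_apply_eq_vecMul Y E i).symm⟩
  · choose v hv using h
    exact ⟨Matrix.of v, funext fun i ↦ (Matrix.mul_apply_eq_vecMul _ E i).trans (hv i)⟩

theorem rowsIdeal_essentialIn_iff {N N' : Submodule R (ι → R)} :
    EssentialIn (rowsIdeal N) (rowsIdeal N') ↔ EssentialIn N N' := by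
  rcases isEmpty_or_nonempty ι with hι | ⟨⟨i₀⟩⟩
  · exact iff_of_true (.of_subsingleton _ _) (.of_subsingleton _ _)
  have hof (v : ι → R) (i : ι) : Matrix.of (Pi.single i₀ v) i = (Pi.single i₀ v : ι → ι → R) i :=
    rfl
  have single_mem {v : ι → R} {N : Submodule R (ι → R)} (hv : v ∈ N) :
      Matrix.of (Pi.single i₀ v) ∈ rowsIdeal N := fun i ↦ by
    rw [hof]
    rcases eq_or_ne i i₀ with rfl | hi
    · simpa using hv
    · simp [hi]
  have single_ne_zero {v : ι → R} (hv : v ≠ 0) : Matrix.of (Pi.single i₀ v) ≠ 0 :=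
    fun h0 ↦ hv (funext fun j ↦ by simpa using congr_fun (congr_fun h0 i₀) j)
  simp only [essentialIn_iff_exists_smul, smul_eq_mul]
  refine ⟨fun ⟨hle, h⟩ ↦ ⟨fun v hv ↦ by simpa [hof] using hle (single_mem hv) i₀,
    fun v hv hv0 ↦ ?_⟩, fun ⟨hle, h⟩ ↦ ⟨fun X hX i ↦ hle (hX i), fun Y hY hY0 ↦ ?_⟩⟩
  · obtain ⟨X, hXN, hX0⟩ := h _ (single_mem hv) (single_ne_zero hv0)
    have hrow (i : ι) : (X * Matrix.of (Pi.single i₀ v)) i = X i i₀ • v := by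
      rw [Matrix.mul_apply_eq_vecMul, Matrix.vecMul_eq_sum,
        Finset.sum_eq_single i₀ (fun j _ hj ↦ by simp [hof, hj]) (by simp)]
      simp [hof]
    obtain ⟨i, hi⟩ : ∃ i, (X * Matrix.of (Pi.single i₀ v)) i ≠ 0 := by
      by_contra! h0
      exact hX0 (funext h0)
    exact ⟨X i i₀, hrow i ▸ hXN i, hrow i ▸ hi⟩
  · obtain ⟨i, hi⟩ : ∃ i, Y i ≠ 0 := by
      by_contra! h0
      exact hY0 (funext h0)
    obtain ⟨r, hrN, hr0⟩ := h _ (hY i) hi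
    have hrow : Matrix.single i₀ i r * Y = Matrix.of (Pi.single i₀ (r • Y i)) := by
      ext k l
      rcases eq_or_ne k i₀ with rfl | hk
      · simp [Matrix.single_mul_apply_same]
      · simp [Matrix.single_mul_apply_of_ne (h := hk), hk]
    exact ⟨Matrix.single i₀ i r, hrow ▸ single_mem hrN, hrow ▸ single_ne_zero hr0⟩

theorem isIdempotentElem_toLinearMapRight'_iff {E : Matrix ι ι R} :
    IsIdempotentElem E.toLinearMapRight' ↔ IsIdempotentElem E := by
  rw [IsIdempotentElem, IsIdempotentElem, Module.End.mul_eq_comp, ← Matrix.toLinearMapRight'_mul,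
    Matrix.toLinearMapRight'.injective.eq_iff]

theorem isCSRickart_pi_iff_isACSRing_matrix :
    IsCSRickart R (ι → R) ↔ IsACSRing (Matrix ι ι R) := by
  simp only [IsACSRing, annElem_eq_rowsIdeal, idealGen_eq_rowsIdeal, rowsIdeal_essentialIn_iff]
  constructor
  · intro h A
    obtain ⟨e, he, hess⟩ := h A.toLinearMapRight'
    refine ⟨LinearMap.toMatrixRight' e, ?_, ?_⟩ <;>
      simpa [← isIdempotentElem_toLinearMapRight'_iff] using ‹_›
  · intro h φ
    obtain ⟨E, hE, hess⟩ := h (LinearMap.toMatrixRight' φ)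
    exact ⟨E.toLinearMapRight', isIdempotentElem_toLinearMapRight'_iff.2 hE, by simpa using hess⟩

end Matrix

/-- For a ring `R` and fixed `n`, the six conditions of Theorem 4.3 are
equivalent: `n`-generated projective modules are CS-Rickart, `R^(n)` is
CS-Rickart, `Matₙ(R)` is an ACS ring, `n`-generated ideals decompose as
`P ⊕ S`, `R^(n)` is relatively CS-Rickart to `R`, and `n`-generated submodules
of `R^(n)` decompose as `P₁ ⊕ … ⊕ Pₙ ⊕ S`. -/
theorem matrix_acs_tfae {R : Type u} [Ring R] (n : ℕ) :
    List.TFAE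
      [ ∀ (P : Type u) [AddCommGroup P] [Module R P],
          Module.Projective R P → NGen n (⊤ : Submodule R P) → IsCSRickart R P,
        IsCSRickart R (Fin n → R),
        IsACSRing (Matrix (Fin n) (Fin n) R),
        ∀ I : Submodule R R, NGen n I →
          ∃ P S : Submodule R R, Module.Projective R P ∧ IsSingularModule R S ∧
            P ⊓ S = ⊥ ∧ P ⊔ S = I,
        IsRelCSRickart R (Fin n → R) R,
        ∀ N : Submodule R (Fin n → R), NGen n N →
          ∃ (P : Fin n → Submodule R (Fin n → R)) (S : Submodule R (Fin n → R)),
            iSupIndep (fun o : Option (Fin n) => o.elim S P) ∧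
            ((⨆ i, P i) ⊔ S = N) ∧
            (∀ i, Module.Projective R (P i) ∧
              ∃ J : Submodule R R, Nonempty ((P i) ≃ₗ[R] J)) ∧
            IsSingularModule R S ] := by
  tfae_have 1 → 2 := fun h ↦
    h _ inferInstance (nGen_iff_exists_range_eq.2 ⟨LinearMap.id, range_id⟩)
  tfae_have 2 → 1 := fun h P _ _ _ hgen ↦ by
    obtain ⟨π, hπ⟩ := nGen_iff_exists_range_eq.1 hgen
    obtain ⟨σ, hσ⟩ := π.exists_rightInverse_of_surjective hπ
    exact h.of_retract σ π hσ
  tfae_have 2 ↔ 3 := isCSRickart_pi_iff_isACSRing_matrix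
  tfae_have 2 → 5 := fun h ↦ by
    rcases isEmpty_or_nonempty (Fin n) with _ | ⟨⟨i⟩⟩
    · exact .of_subsingleton
    · exact IsRelCSRickart.of_injective (ι := LinearMap.single R (fun _ ↦ R) i) h
        (Pi.single_injective (M := fun _ ↦ R) i)
  tfae_have 5 → 2 := IsRelCSRickart.pi
  tfae_have 5 → 4 := fun h I hI ↦ by
    obtain ⟨φ, rfl⟩ := nGen_iff_exists_range_eq.1 hI
    exact hasProjSingularDecomp_range (isRelCSRickart_iff.1 h φ)
  tfae_have 4 → 5 := fun h ↦ isRelCSRickart_of_hasProjSingularDecomp fun φ ↦ h _ (nGen_range φ)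
  tfae_have 4 → 6 := fun h N hN ↦ by
    obtain ⟨ψ, rfl⟩ := nGen_iff_exists_range_eq.1 hN
    exact hasIdealProjSingularDecomp_range h ψ
  tfae_have 6 → 4 := fun h _ ↦ hasProjSingularDecomp_of_nGen h
  tfae_finish

end CSRickartPaper
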